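/- Let G be an m×m matrix of finite measures on (0,∞) with total mass matrix ||G|| = ∫₀^∞ G(dx) substochastic with spectral radius strictly less than 1. Then the matrix renewal series Σ_{n=0}^∞ G^{*n}(u) converges for each u ≥ 0, and the vector function φ(u) = Σ_{n=0}^∞ G^{*n}(u)(I - ||G||)e, with e the all-ones vector, takes values in [0,1]^m and is non-decreasing in u with limit e as u → ∞. -/

import Mathlib

/-!
Entrywise `0 ≤ G^{*n}(u) ≤ ‖G‖ⁿ`, and `‖G‖ⁿ` is summable because the spectral radius of `‖G‖`
is `< 1` (Gelfand's formula), so the renewal series converges. Writing `d = (I - ‖G‖)e ≥ 0`,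
`φ(u) = Σₙ G^{*n}(u) d` has nonnegative terms, nondecreasing in `u`. Since
`G^{*(n+1)}(u) ≤ G^{*n}(u)‖G‖`, the `n`-th term is at most `G^{*n}(u)e - G^{*(n+1)}(u)e`, and the
series telescopes to a bound `≤ 1`. As `u → ∞`, `G^{*n}(u) → ‖G‖ⁿ` (the measures live on `(0,∞)`),
so by dominated convergence `φ(u) → (Σₙ ‖G‖ⁿ)(I - ‖G‖)e = e`.
-/

open MeasureTheory Matrix Set Filter

/-- `n`-fold matrix convolution power of a matrix of measures on `(0,∞)`:
`G^{*0}(u) = I` and `G^{*(n+1)}(u) = ∫₀^u G^{*n}(u-y) G(dy)`. -/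
noncomputable def matConvPow {m : ℕ} (G : Fin m → Fin m → Measure ℝ) :
    ℕ → ℝ → Matrix (Fin m) (Fin m) ℝ
  | 0, _ => 1
  | (n + 1), u => Matrix.of fun i j =>
      ∑ k, ∫ y in Set.Icc (0 : ℝ) u, (matConvPow G n (u - y)) i k ∂(G k j)

open Topology

theorem summable_norm_pow_of_spectralRadius_lt_one {A : Type*} [NormedRing A]
    [NormedAlgebra ℂ A] [CompleteSpace A] {a : A} (ha : spectralRadius ℂ a < 1) :
    Summable fun n : ℕ => ‖a ^ n‖ := by
  obtain ⟨r, hr, hr1⟩ := ENNReal.lt_iff_exists_nnreal_btwn.1 ha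
  have hbound : ∀ᶠ n : ℕ in atTop, ‖a ^ n‖ ≤ (r : ℝ) ^ n := by
    filter_upwards [(spectrum.pow_nnnorm_pow_one_div_tendsto_nhds_spectralRadius a).eventually
      (gt_mem_nhds hr), eventually_gt_atTop 0] with n hn hn0
    rw [one_div, ENNReal.rpow_inv_lt_iff (by positivity), ENNReal.rpow_natCast] at hn
    exact_mod_cast hn.le
  exact summable_of_isBigO_nat' (summable_geometric_of_lt_one r.2 (by exact_mod_cast hr1))
    (Asymptotics.IsBigO.of_bound' (by simpa using hbound))

theorem Matrix.summable_pow_of_spectrum_norm_lt_one {n : Type*} [Fintype n] [DecidableEq n]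
    (M : Matrix n n ℝ) (hM : ∀ z ∈ spectrum ℂ (M.map Complex.ofReal), ‖z‖ < 1) :
    Summable fun k : ℕ => M ^ k := by
  let _ : NormedRing (Matrix n n ℂ) := Matrix.linftyOpNormedRing
  let _ : NormedAlgebra ℂ (Matrix n n ℂ) := Matrix.linftyOpNormedAlgebra
  have _ : CompleteSpace (Matrix n n ℂ) := FiniteDimensional.complete ℂ _
  have hρ : spectralRadius ℂ (M.map Complex.ofReal) < 1 := by
    rcases (spectrum ℂ (M.map Complex.ofReal)).eq_empty_or_nonempty with h | h
    · simp [spectralRadius, h]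
    · exact_mod_cast spectrum.spectralRadius_lt_of_forall_lt_of_nonempty h
        fun z hz => by exact_mod_cast hM z hz
  have hpow (k : ℕ) : (M.map Complex.ofReal) ^ k = (M ^ k).map Complex.ofReal :=
    (map_pow Complex.ofRealHom.mapMatrix M k).symm
  have hA : Summable fun k : ℕ => (M ^ k).map Complex.ofReal :=
    (summable_norm_pow_of_spectralRadius_lt_one hρ).of_norm.congr hpow
  convert hA.map Complex.reAddGroupHom.mapMatrix (continuous_id.matrix_map Complex.continuous_re)
  ext
  simp

namespace Matrix

variable {l n R : Type*} [Fintype n] [NonUnitalNonAssocSemiring R] [TopologicalSpace R]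
  [IsTopologicalSemiring R]

theorem summable_mulVec {P : ℕ → Matrix l n R} (hP : Summable P) (v : n → R) :
    Summable fun k => P k *ᵥ v :=
  hP.map (mulVec.addMonoidHomLeft v) (continuous_id.matrix_mulVec continuous_const)

theorem tsum_mulVec_apply [T2Space R] {P : ℕ → Matrix l n R} (hP : Summable P) (v : n → R)
    (i : l) : ((∑' k, P k) *ᵥ v) i = ∑' k, (P k *ᵥ v) i := by
  rw [← tsum_apply (summable_mulVec hP v)]
  exact congrFun (hP.map_tsum (mulVec.addMonoidHomLeft v)
    (continuous_id.matrix_mulVec continuous_const)) i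

theorem sum_apply_of_tsum_mul {o : Type*} [Fintype o] {P : ℕ → Matrix l n ℝ} (hP : Summable P)
    (B : Matrix n o ℝ) (i : l) :
    ∑ j, ((of fun a b => ∑' k, P k a b) * B) i j = ∑' k, (P k *ᵥ (B *ᵥ 1)) i := by
  have hS : (of fun a b => ∑' k, P k a b) = ∑' k, P k := by
    ext a b
    exact ((congrFun (tsum_apply hP (x := a)) b).trans (tsum_apply (Pi.summable.1 hP a))).symm
  rw [hS, ← tsum_mulVec_apply hP, mulVec_mulVec]
  simp [mulVec, dotProduct]

theorem tsum_mulVec_one_sub_mulVec_one_le_one [DecidableEq n] {P : ℕ → Matrix n n ℝ}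
    {M : Matrix n n ℝ} (hP0 : P 0 = 1) (hP : ∀ k i j, 0 ≤ P k i j)
    (hPM : ∀ k i j, P (k + 1) i j ≤ (P k * M) i j) (i : n)
    (hs : Summable fun k => (P k *ᵥ ((1 - M) *ᵥ 1)) i) :
    ∑' k, (P k *ᵥ ((1 - M) *ᵥ 1)) i ≤ 1 := by
  have hstep (k : ℕ) : (P k *ᵥ ((1 - M) *ᵥ 1)) i ≤ (P k *ᵥ 1) i - (P (k + 1) *ᵥ 1) i := by
    rw [mulVec_mulVec, mul_sub, mul_one, sub_mulVec, Pi.sub_apply]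
    exact sub_le_sub_left (dotProduct_le_dotProduct_of_nonneg_right (hPM k i) zero_le_one) _
  refine hs.tsum_le_of_sum_range_le fun N => ?_
  calc ∑ k ∈ Finset.range N, (P k *ᵥ ((1 - M) *ᵥ 1)) i
      ≤ ∑ k ∈ Finset.range N, ((P k *ᵥ 1) i - (P (k + 1) *ᵥ 1) i) :=
        Finset.sum_le_sum fun k _ => hstep k
    _ = 1 - (P N *ᵥ 1) i := by rw [Finset.sum_range_sub', hP0, one_mulVec, Pi.one_apply]
    _ ≤ 1 := sub_le_self _ (dotProduct_nonneg_of_nonneg (hP N i) zero_le_one)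

end Matrix

noncomputable def convIcc (μ : Measure ℝ) (f : ℝ → ℝ) (u : ℝ) : ℝ :=
  ∫ y in Icc 0 u, f (u - y) ∂μ

namespace convIcc

variable {μ : Measure ℝ} {f : ℝ → ℝ}

theorem nonneg (hf : 0 ≤ f) (u : ℝ) : 0 ≤ convIcc μ f u :=
  integral_nonneg fun y => hf (u - y)

theorem measurable [SFinite μ] (hf : Measurable f) : Measurable (convIcc μ f) := by
  have hprod : StronglyMeasurable (Function.uncurry fun u y =>
      {q : ℝ × ℝ | 0 ≤ q.2 ∧ q.2 ≤ q.1}.indicator (fun q => f (q.1 - q.2)) (u, y)) :=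
    ((hf.comp (measurable_fst.sub measurable_snd)).indicator
      ((measurableSet_le measurable_const measurable_snd).inter
        (measurableSet_le measurable_snd measurable_fst))).stronglyMeasurable
  convert (hprod.integral_prod_right (ν := μ)).measurable using 1
  ext u
  rw [convIcc, ← integral_indicator measurableSet_Icc]
  rfl

theorem le_mul_measureReal_univ [IsFiniteMeasure μ] {u C : ℝ} (hf : 0 ≤ f)
    (hfC : ∀ v ≤ u, f v ≤ C) : convIcc μ f u ≤ C * μ.real univ := by
  have hC : 0 ≤ C := (hf u).trans (hfC u le_rfl)
  calc convIcc μ f u ≤ ‖convIcc μ f u‖ := Real.le_norm_self _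
    _ ≤ C * μ.real (Icc 0 u) := norm_setIntegral_le_of_norm_le_const (measure_lt_top _ _)
        fun y hy => by rw [Real.norm_of_nonneg (hf _)]; exact hfC _ (by linarith [hy.1])
    _ ≤ C * μ.real univ := by gcongr; exacts [measure_ne_top _ _, subset_univ _]

theorem integrableOn [IsFiniteMeasure μ] (hf : Monotone f) (hf0 : 0 ≤ f) (hfm : Measurable f)
    (u : ℝ) : IntegrableOn (fun y => f (u - y)) (Icc 0 u) μ :=
  Measure.integrableOn_of_bounded (measure_ne_top _ _)
    (hfm.comp (measurable_const.sub measurable_id)).aestronglyMeasurable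
    ((ae_restrict_iff' measurableSet_Icc).2 (ae_of_all _ fun y hy => by
      rw [Real.norm_of_nonneg (hf0 _)]; exact hf (by linarith [hy.1] : u - y ≤ u)))

theorem monotone [IsFiniteMeasure μ] (hf : Monotone f) (hf0 : 0 ≤ f) (hfm : Measurable f) :
    Monotone (convIcc μ f) := by
  intro u v huv
  calc convIcc μ f u ≤ ∫ y in Icc 0 u, f (v - y) ∂μ :=
        setIntegral_mono_on (integrableOn hf hf0 hfm u)
          ((integrableOn hf hf0 hfm v).mono_set (Icc_subset_Icc_right huv)) measurableSet_Icc
          fun y _ => hf (by linarith)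
    _ ≤ convIcc μ f v :=
        setIntegral_mono_set (integrableOn hf hf0 hfm v) (ae_of_all _ fun y => hf0 (v - y))
          (Icc_subset_Icc_right huv).eventuallyLE

theorem tendsto [IsFiniteMeasure μ] (hμ : μ (Iio 0) = 0) (hfm : Measurable f) {C c : ℝ}
    (hfC : ∀ v, ‖f v‖ ≤ C) (hf : Tendsto f atTop (𝓝 c)) :
    Tendsto (convIcc μ f) atTop (𝓝 (c * μ.real univ)) := by
  have hpos : ∀ᵐ y ∂μ, 0 ≤ y := by
    rw [ae_iff]
    simp only [not_le]
    exact hμ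
  have key := tendsto_integral_filter_of_dominated_convergence (μ := μ) (l := atTop)
    (F := fun u y => (Icc 0 u).indicator (fun y => f (u - y)) y) (f := fun _ => c) (fun _ => C)
    (Eventually.of_forall fun u => ((hfm.comp (measurable_const.sub measurable_id)).indicator
      measurableSet_Icc).aestronglyMeasurable)
    (Eventually.of_forall fun u => ae_of_all _ fun y => by
      by_cases hy : y ∈ Icc 0 u
      · simpa [indicator_of_mem hy] using hfC (u - y)
      · simpa [indicator_of_notMem hy] using (norm_nonneg _).trans (hfC 0))
    (integrable_const C)
    (hpos.mono fun y hy => by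
      refine (hf.comp (tendsto_atTop_add_const_right atTop (-y) tendsto_id)).congr' ?_
      filter_upwards [eventually_ge_atTop y] with u hu
      simp [indicator_of_mem (mem_Icc.2 ⟨hy, hu⟩), sub_eq_add_neg])
  unfold convIcc
  simpa [integral_indicator measurableSet_Icc, mul_comm] using key

end convIcc

noncomputable def massMatrix {m : ℕ} (G : Fin m → Fin m → Measure ℝ) : Matrix (Fin m) (Fin m) ℝ :=
  Matrix.of fun i j => (G i j).real univ

namespace matConvPow

variable {m : ℕ} (G : Fin m → Fin m → Measure ℝ)

theorem succ_apply (n : ℕ) (u : ℝ) (i j : Fin m) :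
    matConvPow G (n + 1) u i j = ∑ k, convIcc (G k j) (fun v => matConvPow G n v i k) u :=
  rfl

theorem nonneg (n : ℕ) (u : ℝ) (i j : Fin m) : 0 ≤ matConvPow G n u i j := by
  induction n generalizing u i j with
  | zero =>
    rw [matConvPow, one_apply]
    positivity
  | succ n ih =>
    rw [succ_apply]
    exact Finset.sum_nonneg fun k _ => convIcc.nonneg (fun v => ih v i k) u

theorem measurable [∀ i j, SFinite (G i j)] (n : ℕ) (i j : Fin m) :
    Measurable fun u => matConvPow G n u i j := by
  induction n generalizing i j with
  | zero => exact measurable_const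
  | succ n ih =>
    simp only [succ_apply]
    exact Finset.measurable_sum _ fun k _ => convIcc.measurable (ih i k)

variable [∀ i j, IsFiniteMeasure (G i j)]

theorem monotone (n : ℕ) (i j : Fin m) : Monotone fun u => matConvPow G n u i j := by
  induction n generalizing i j with
  | zero => exact monotone_const
  | succ n ih =>
    intro u v huv
    simp only [succ_apply]
    exact Finset.sum_le_sum fun k _ =>
      convIcc.monotone (ih i k) (fun v => nonneg G n v i k) (measurable G n i k) huv

theorem le_pow_massMatrix (n : ℕ) (u : ℝ) (i j : Fin m) :
    matConvPow G n u i j ≤ (massMatrix G ^ n) i j := by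
  induction n generalizing u i j with
  | zero => rfl
  | succ n ih =>
    rw [succ_apply, pow_succ, mul_apply]
    exact Finset.sum_le_sum fun k _ =>
      convIcc.le_mul_measureReal_univ (fun v => nonneg G n v i k) fun v _ => ih v i k

theorem succ_le_mul_massMatrix (n : ℕ) (u : ℝ) (i j : Fin m) :
    matConvPow G (n + 1) u i j ≤ (matConvPow G n u * massMatrix G) i j := by
  rw [succ_apply, mul_apply]
  exact Finset.sum_le_sum fun k _ =>
    convIcc.le_mul_measureReal_univ (fun v => nonneg G n v i k) fun v hv => monotone G n i k hv

theorem tendsto_pow_massMatrix (hG : ∀ i j, G i j (Iio 0) = 0) (n : ℕ) (i j : Fin m) :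
    Tendsto (fun u => matConvPow G n u i j) atTop (𝓝 ((massMatrix G ^ n) i j)) := by
  induction n generalizing i j with
  | zero => exact tendsto_const_nhds
  | succ n ih =>
    simp only [succ_apply, pow_succ, mul_apply]
    exact tendsto_finsetSum _ fun k _ => convIcc.tendsto (hG k j) (measurable G n i k)
      (fun v => by rw [Real.norm_of_nonneg (nonneg G n v i k)]; exact le_pow_massMatrix G n v i k)
      (ih i k)

theorem summable (hM : Summable fun n => massMatrix G ^ n) (u : ℝ) :
    Summable fun n => matConvPow G n u :=
  Pi.summable.2 fun i => Pi.summable.2 fun j =>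
    .of_nonneg_of_le (fun n => nonneg G n u i j) (fun n => le_pow_massMatrix G n u i j)
      (Pi.summable.1 (Pi.summable.1 hM i) j)

theorem monotone_tsum_mulVec_apply (hM : Summable fun n => massMatrix G ^ n) {v : Fin m → ℝ}
    (hv : 0 ≤ v) (i : Fin m) : Monotone fun u => ∑' n, (matConvPow G n u *ᵥ v) i :=
  fun u u' huu' => (Pi.summable.1 (summable_mulVec (summable G hM u) v) i).tsum_le_tsum
    (fun n => dotProduct_le_dotProduct_of_nonneg_right (fun k => monotone G n i k huu') hv)
    (Pi.summable.1 (summable_mulVec (summable G hM u') v) i)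

theorem tendsto_tsum_mulVec_apply (hG : ∀ i j, G i j (Iio 0) = 0)
    (hM : Summable fun n => massMatrix G ^ n) {v : Fin m → ℝ} (hv : 0 ≤ v) (i : Fin m) :
    Tendsto (fun u => ∑' n, (matConvPow G n u *ᵥ v) i) atTop
      (𝓝 (∑' n, (massMatrix G ^ n *ᵥ v) i)) :=
  tendsto_tsum_of_dominated_convergence (Pi.summable.1 (summable_mulVec hM v) i)
    (fun n => by
      simpa only [mulVec, dotProduct] using
        tendsto_finsetSum Finset.univ fun k _ => (tendsto_pow_massMatrix G hG n i k).mul_const (v k))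
    (Eventually.of_forall fun u n => by
      have h0 : 0 ≤ (matConvPow G n u *ᵥ v) i := dotProduct_nonneg_of_nonneg (nonneg G n u i) hv
      rw [Real.norm_of_nonneg h0]
      exact dotProduct_le_dotProduct_of_nonneg_right (le_pow_massMatrix G n u i) hv)

end matConvPow

theorem stmt_8_general {m : ℕ}
    (G : Fin m → Fin m → Measure ℝ) [∀ i j, IsFiniteMeasure (G i j)]
    (hsupp : ∀ i j, G i j (Set.Iic 0) = 0)
    (Gnorm : Matrix (Fin m) (Fin m) ℝ)
    (hGnorm : ∀ i j, Gnorm i j = (G i j Set.univ).toReal)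
    (hsub : ∀ i, ∑ j, Gnorm i j ≤ 1)
    (hρ : ∀ z ∈ spectrum ℂ (Gnorm.map (Complex.ofReal)), ‖z‖ < 1)
    (φ : ℝ → Fin m → ℝ)
    (hφ : ∀ u i, φ u i = ∑ j,
        ((Matrix.of fun a b => ∑' n : ℕ, matConvPow G n u a b) *
          (1 - Gnorm)) i j) :
    (∀ u, 0 ≤ u → ∀ i j, Summable fun n : ℕ => matConvPow G n u i j) ∧
    (∀ u, 0 ≤ u → ∀ i, φ u i ∈ Set.Icc (0 : ℝ) 1) ∧
    (∀ i, ∀ u v : ℝ, 0 ≤ u → u ≤ v → φ u i ≤ φ v i) ∧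
    (∀ i, Tendsto (fun u => φ u i) atTop (nhds 1)) := by
  obtain rfl : Gnorm = massMatrix G := Matrix.ext fun i j => hGnorm i j
  have hM := (massMatrix G).summable_pow_of_spectrum_norm_lt_one hρ
  have hP := matConvPow.summable G hM
  set d : Fin m → ℝ := (1 - massMatrix G) *ᵥ 1
  have hd : 0 ≤ d := fun k => by
    simpa [d, mulVec, dotProduct, sub_mul, Finset.sum_sub_distrib, one_apply] using hsub k
  have hφd (u : ℝ) (i : Fin m) : φ u i = ∑' n, (matConvPow G n u *ᵥ d) i := by
    rw [hφ, sum_apply_of_tsum_mul (hP u)]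
  have hlim (i : Fin m) : ∑' n, (massMatrix G ^ n *ᵥ d) i = 1 := by
    rw [← tsum_mulVec_apply hM, mulVec_mulVec, hM.tsum_pow_mul_one_sub, one_mulVec, Pi.one_apply]
  refine ⟨fun u _ i j => Pi.summable.1 (Pi.summable.1 (hP u) i) j,
    fun u _ i => ⟨?_, ?_⟩, fun i u v _ huv => ?_, fun i => ?_⟩
  · rw [hφd]
    exact tsum_nonneg fun n => dotProduct_nonneg_of_nonneg (matConvPow.nonneg G n u i) hd
  · rw [hφd]
    exact tsum_mulVec_one_sub_mulVec_one_le_one rfl (fun k => matConvPow.nonneg G k u)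
      (fun k => matConvPow.succ_le_mul_massMatrix G k u) i
      (Pi.summable.1 (summable_mulVec (hP u) d) i)
  · simpa only [hφd] using matConvPow.monotone_tsum_mulVec_apply G hM hd i huv
  · simpa [hφd, hlim] using matConvPow.tendsto_tsum_mulVec_apply G
      (fun i j => measure_mono_null Iio_subset_Iic_self (hsupp i j)) hM hd i

/-- convergence of the matrix renewal series and the Pollaczeck–Khinchine-type
vector `φ(u) = Σₙ G^{*n}(u)(I - ‖G‖)e`, which takes values in `[0,1]^m`, is nondecreasing
and tends to `e` as `u → ∞`. -/
theorem stmt_8 {m : ℕ} (hm : 0 < m)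
    (G : Fin m → Fin m → Measure ℝ) [∀ i j, IsFiniteMeasure (G i j)]
    (hsupp : ∀ i j, G i j (Set.Iic 0) = 0)
    (Gnorm : Matrix (Fin m) (Fin m) ℝ)
    (hGnorm : ∀ i j, Gnorm i j = (G i j Set.univ).toReal)
    (hsub : ∀ i, ∑ j, Gnorm i j ≤ 1)
    (hρ : ∀ z ∈ spectrum ℂ (Gnorm.map (Complex.ofReal)), ‖z‖ < 1)
    (φ : ℝ → Fin m → ℝ)
    (hφ : ∀ u i, φ u i = ∑ j,
        ((Matrix.of fun a b => ∑' n : ℕ, matConvPow G n u a b) *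
          (1 - Gnorm)) i j) :
    (∀ u, 0 ≤ u → ∀ i j, Summable fun n : ℕ => matConvPow G n u i j) ∧
    (∀ u, 0 ≤ u → ∀ i, φ u i ∈ Set.Icc (0 : ℝ) 1) ∧
    (∀ i, ∀ u v : ℝ, 0 ≤ u → u ≤ v → φ u i ≤ φ v i) ∧
    (∀ i, Tendsto (fun u => φ u i) atTop (nhds 1)) :=
  stmt_8_general G hsupp Gnorm hGnorm hsub hρ φ hφ
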